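/- Let S and O be finite nonempty sets. Let M = (r,p), M_I = (r,p_I), and M̂ = (r,p̂) be SMDP models over (S,O) sharing the same reward function r with 0 ≤ r(s,o) ≤ Rmax, with ∑_{s'} p(s,o,s') ≤ γ̄, ∑_{s'} p_I(s,o,s') ≤ γ̄, and ∑_{s'} p̂(s,o,s') ≤ γ̄ for all (s,o) where γ̄ < 1, and with max_{s,o} ∑_{s'} |p(s,o,s') − p_I(s,o,s')| ≤ γ̄ · ζ. Let Q*, Q*_I, Q̂* be Bellman-optimal value functions for M, M_I, M̂ respectively, and let V*_{M_I}(s) = max_o Q*_I(s,o). Define Q-value iteration in M̂ by Q_0 = 0 and Q_k(s,o) = r(s,o) + ∑_{s'} p̂(s,o,s') · max_{o'} Q_{k−1}(s',o'). If max_{s,o} | ∑_{s'} ( p̂(s,o,s') − p_I(s,o,s') ) · V*_{M_I}(s') | ≤ ε₁, then for every k ≥ 0, ‖Q_k − Q*‖_∞ ≤ γ̄^k · Rmax/(1 − γ̄) + ε₁/(1 − γ̄) + ζ · γ̄ · Rmax/(1 − γ̄)². -/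

import Mathlib

/-!
The Bellman operator `T_q Q = r + q · max Q` of a model with total transition mass at most `γ`
is a `γ`-contraction for the sup norm, because `max` is `1`-Lipschitz. Hence the value-iteration
iterate `T_p̂^[k] 0` is within `γ^k ‖r‖ / (1 - γ)` of the fixed point `Q̂*`, and by the
simulation estimate `‖Q₁ - Q₂‖ ≤ ‖T_{q₁} Q₂ - T_{q₂} Q₂‖ / (1 - γ)` for fixed points of two
models, `‖Q̂* - Q*_I‖ ≤ ε₁ / (1 - γ)` and `‖Q*_I - Q*‖ ≤ γ ζ ‖Q*‖ / (1 - γ)` with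
`‖Q*‖ ≤ Rmax / (1 - γ)`. The triangle inequality combines the three terms.
-/

open Function NNReal

noncomputable def fmax {α : Type*} [Fintype α] [Nonempty α] (f : α → ℝ) : ℝ :=
  Finset.univ.sup' Finset.univ_nonempty f

section fmax

variable {α : Type*} [Fintype α] [Nonempty α]

lemma le_fmax (f : α → ℝ) (a : α) : f a ≤ fmax f :=
  Finset.le_sup' f (Finset.mem_univ a)

lemma fmax_le {f : α → ℝ} {c : ℝ} (h : ∀ a, f a ≤ c) : fmax f ≤ c :=
  Finset.sup'_le _ _ fun a _ => h a

@[simp]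
lemma fmax_zero : fmax (0 : α → ℝ) = 0 :=
  Finset.sup'_const _ 0

lemma lipschitzWith_one_fmax : LipschitzWith 1 (fmax : (α → ℝ) → ℝ) :=
  LipschitzWith.of_le_add fun f g => fmax_le fun a =>
    calc f a ≤ g a + dist (f a) (g a) := by
          rw [Real.dist_eq]; linarith [le_abs_self (f a - g a)]
      _ ≤ fmax g + dist f g := add_le_add (le_fmax g a) (dist_le_pi_dist f g a)

lemma abs_fmax_le_norm (f : α → ℝ) : |fmax f| ≤ ‖f‖ := by
  simpa [Real.dist_eq, dist_zero_right] using lipschitzWith_one_fmax.dist_le_mul f 0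

lemma norm_fmax_le_norm {β : Type*} [Fintype β] (Q : β → α → ℝ) :
    ‖fun b => fmax (Q b)‖ ≤ ‖Q‖ :=
  (pi_norm_le_iff_of_nonneg (norm_nonneg _)).2 fun b =>
    (abs_fmax_le_norm (Q b)).trans (norm_le_pi_norm Q b)

end fmax

lemma abs_sum_mul_le_sum_abs_mul_norm {ι : Type*} [Fintype ι] (w v : ι → ℝ) :
    |∑ i, w i * v i| ≤ (∑ i, |w i|) * ‖v‖ :=
  calc |∑ i, w i * v i| ≤ ∑ i, |w i * v i| := Finset.abs_sum_le_sum_abs _ _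
    _ ≤ ∑ i, |w i| * ‖v‖ := Finset.sum_le_sum fun i _ => by
        rw [abs_mul]; gcongr; exact norm_le_pi_norm v i
    _ = (∑ i, |w i|) * ‖v‖ := (Finset.sum_mul _ _ _).symm

section bellman

variable {S O : Type*} [Fintype S] [Fintype O]

lemma pi_norm_le_of_abs_le {C : ℝ} (hC : 0 ≤ C) {Q : S → O → ℝ} (h : ∀ s o, |Q s o| ≤ C) :
    ‖Q‖ ≤ C :=
  (pi_norm_le_iff_of_nonneg hC).2 fun s => (pi_norm_le_iff_of_nonneg hC).2 fun o => h s o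

variable [Nonempty O]

noncomputable def bellmanOp (r : S → O → ℝ) (q : S → O → S → ℝ) (Q : S → O → ℝ) :
    S → O → ℝ :=
  fun s o => r s o + ∑ s', q s o s' * fmax (Q s')

@[simp]
lemma bellmanOp_zero (r : S → O → ℝ) (q : S → O → S → ℝ) : bellmanOp r q 0 = r := by
  ext s o
  simp [bellmanOp]

lemma bellmanOp_sub_bellmanOp (r : S → O → ℝ) (q₁ q₂ : S → O → S → ℝ) (Q : S → O → ℝ) :
    bellmanOp r q₁ Q - bellmanOp r q₂ Q =
      fun s o => ∑ s', (q₁ s o s' - q₂ s o s') * fmax (Q s') := by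
  ext s o
  simp only [bellmanOp, Pi.sub_apply, add_sub_add_left_eq_sub, ← Finset.sum_sub_distrib, sub_mul]

lemma lipschitzWith_bellmanOp (r : S → O → ℝ) {q : S → O → S → ℝ} {γ : ℝ≥0}
    (hq : ∀ s o s', 0 ≤ q s o s') (hγ : ∀ s o, ∑ s', q s o s' ≤ γ) :
    LipschitzWith γ (bellmanOp r q) := by
  refine LipschitzWith.of_dist_le_mul fun Q Q' => ?_
  have hmax : ‖fun s' => fmax (Q s') - fmax (Q' s')‖ ≤ dist Q Q' :=
    (pi_norm_le_iff_of_nonneg dist_nonneg).2 fun s' =>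
      (lipschitzWith_one_fmax.dist_le_mul (Q s') (Q' s')).trans
        (by simpa using dist_le_pi_dist Q Q' s')
  rw [dist_eq_norm]
  refine (pi_norm_le_iff_of_nonneg (by positivity)).2 fun s =>
    (pi_norm_le_iff_of_nonneg (by positivity)).2 fun o => ?_
  simp only [Pi.sub_apply, bellmanOp, Real.norm_eq_abs, add_sub_add_left_eq_sub,
    ← Finset.sum_sub_distrib, ← mul_sub]
  calc |∑ s', q s o s' * (fmax (Q s') - fmax (Q' s'))|
      ≤ (∑ s', |q s o s'|) * ‖fun s' => fmax (Q s') - fmax (Q' s')‖ :=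
        abs_sum_mul_le_sum_abs_mul_norm _ _
    _ ≤ γ * dist Q Q' := by
        simp only [abs_of_nonneg (hq s o _)]
        gcongr
        exact hγ s o

lemma contractingWith_bellmanOp (r : S → O → ℝ) {q : S → O → S → ℝ} {γ : ℝ}
    (hq : ∀ s o s', 0 ≤ q s o s') (hγ : ∀ s o, ∑ s', q s o s' ≤ γ) (hγ1 : γ < 1) :
    ContractingWith γ.toNNReal (bellmanOp r q) :=
  ⟨Real.toNNReal_lt_one.2 hγ1,
    lipschitzWith_bellmanOp r hq fun s o => (hγ s o).trans (Real.le_coe_toNNReal γ)⟩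

lemma fmax_abs_sub_le_dist [Nonempty S] (Q Q' : S → O → ℝ) :
    fmax (fun so : S × O => |Q so.1 so.2 - Q' so.1 so.2|) ≤ dist Q Q' :=
  fmax_le fun ⟨s, o⟩ => by
    simpa [Real.dist_eq] using (dist_le_pi_dist (Q s) (Q' s) o).trans (dist_le_pi_dist Q Q' s)

lemma abs_sum_mul_fmax_le {w : S → ℝ} {Q : S → O → ℝ} {a b : ℝ}
    (hw : ∑ s, |w s| ≤ a) (hQ : ‖Q‖ ≤ b) : |∑ s, w s * fmax (Q s)| ≤ a * b :=
  (abs_sum_mul_le_sum_abs_mul_norm _ _).trans <|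
    mul_le_mul hw ((norm_fmax_le_norm Q).trans hQ) (norm_nonneg _)
      ((Finset.sum_nonneg fun s _ => abs_nonneg (w s)).trans hw)

variable {r : S → O → ℝ} {q q₁ q₂ : S → O → S → ℝ} {K : ℝ≥0}

lemma norm_le_of_isFixedPt_bellmanOp (hT : ContractingWith K (bellmanOp r q)) {Q : S → O → ℝ}
    (hQ : IsFixedPt (bellmanOp r q) Q) : ‖Q‖ ≤ ‖r‖ / (1 - K) := by
  simpa using hT.dist_le_of_fixedPoint 0 hQ

lemma dist_iterate_bellmanOp_le (hT : ContractingWith K (bellmanOp r q)) {Q : S → O → ℝ}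
    (hQ : IsFixedPt (bellmanOp r q) Q) (k : ℕ) :
    dist ((bellmanOp r q)^[k] 0) Q ≤ ‖r‖ * K ^ k / (1 - K) := by
  simpa [← hT.fixedPoint_unique hQ] using hT.apriori_dist_iterate_fixedPoint_le 0 k

/-- The simulation lemma. -/
lemma dist_le_of_isFixedPt_bellmanOp [Nonempty S] (hT : ContractingWith K (bellmanOp r q₁))
    {Q₁ Q₂ : S → O → ℝ} (hQ₁ : IsFixedPt (bellmanOp r q₁) Q₁)
    (hQ₂ : IsFixedPt (bellmanOp r q₂) Q₂) {E : ℝ}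
    (hE : ∀ s o, |∑ s', (q₁ s o s' - q₂ s o s') * fmax (Q₂ s')| ≤ E) :
    dist Q₁ Q₂ ≤ E / (1 - K) := by
  have hE0 : 0 ≤ E := (abs_nonneg _).trans (hE (Classical.arbitrary S) (Classical.arbitrary O))
  have hstep : dist Q₂ (bellmanOp r q₁ Q₂) ≤ E :=
    calc dist Q₂ (bellmanOp r q₁ Q₂) = ‖bellmanOp r q₁ Q₂ - bellmanOp r q₂ Q₂‖ := by
          rw [dist_comm, dist_eq_norm, hQ₂.eq]
      _ ≤ E := by
          rw [bellmanOp_sub_bellmanOp]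
          exact pi_norm_le_of_abs_le hE0 hE
  rw [dist_comm]
  exact (hT.dist_le_of_fixedPoint Q₂ hQ₁).trans <|
    div_le_div_of_nonneg_right hstep hT.one_sub_K_pos.le

end bellman

/-- Deterministic core of Theorem 3 (sample complexity of temporally abstract partial
models): the error of the `k`-th Q-value-iteration iterate computed in the empirical
model decomposes into a geometric optimization term, an estimation term, and the
intent-approximation term. -/
theorem qvi_error_decomposition {S O : Type*} [Fintype S] [Fintype O] [Nonempty S] [Nonempty O]
    (r : S → O → ℝ) (p pI phat : S → O → S → ℝ)
    (Rmax γbar ζ ε₁ : ℝ)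
    (hr0 : ∀ s o, 0 ≤ r s o) (hrR : ∀ s o, r s o ≤ Rmax)
    (hp : ∀ s o s', 0 ≤ p s o s') (hpI : ∀ s o s', 0 ≤ pI s o s')
    (hphat : ∀ s o s', 0 ≤ phat s o s')
    (hγp : ∀ s o, ∑ s' : S, p s o s' ≤ γbar)
    (hγpI : ∀ s o, ∑ s' : S, pI s o s' ≤ γbar)
    (hγphat : ∀ s o, ∑ s' : S, phat s o s' ≤ γbar)
    (hγlt : γbar < 1)
    (hζ : fmax (fun so : S × O => ∑ s' : S, |p so.1 so.2 s' - pI so.1 so.2 s'|) ≤ γbar * ζ)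
    (Qstar QI Qhat : S → O → ℝ)
    (hQstar : ∀ s o, Qstar s o = r s o + ∑ s' : S, p s o s' * fmax (fun o' => Qstar s' o'))
    (hQI : ∀ s o, QI s o = r s o + ∑ s' : S, pI s o s' * fmax (fun o' => QI s' o'))
    (hQhat : ∀ s o, Qhat s o = r s o + ∑ s' : S, phat s o s' * fmax (fun o' => Qhat s' o'))
    (VstarMI : S → ℝ) (hVstarMI : ∀ s, VstarMI s = fmax (fun o => QI s o))
    (Q : ℕ → S → O → ℝ)
    (hQ0 : ∀ s o, Q 0 s o = 0)
    (hQk : ∀ k s o, Q (k + 1) s o =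
      r s o + ∑ s' : S, phat s o s' * fmax (fun o' => Q k s' o'))
    (hε₁ : fmax (fun so : S × O =>
      |∑ s' : S, (phat so.1 so.2 s' - pI so.1 so.2 s') * VstarMI s'|) ≤ ε₁) :
    ∀ k : ℕ,
      fmax (fun so : S × O => |Q k so.1 so.2 - Qstar so.1 so.2|) ≤
        γbar ^ k * Rmax / (1 - γbar) + ε₁ / (1 - γbar) +
          ζ * γbar * Rmax / (1 - γbar) ^ 2 := by
  intro k
  have hγ0 : 0 ≤ γbar := (Finset.sum_nonneg fun s' _ =>
    hp (Classical.arbitrary S) (Classical.arbitrary O) s').trans (hγp _ _)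
  have hK : (γbar.toNNReal : ℝ) = γbar := Real.coe_toNNReal _ hγ0
  have hTphat := contractingWith_bellmanOp r hphat hγphat hγlt
  have hfix {q : S → O → S → ℝ} {Q' : S → O → ℝ}
      (h : ∀ s o, Q' s o = r s o + ∑ s', q s o s' * fmax (fun o' => Q' s' o')) :
      IsFixedPt (bellmanOp r q) Q' := funext₂ fun s o => (h s o).symm
  have hiter : Q k = (bellmanOp r phat)^[k] 0 := by
    induction k with
    | zero => exact funext₂ hQ0
    | succ k ih => rw [iterate_succ_apply', ← ih]; exact funext₂ (hQk k)
  have hr : ‖r‖ ≤ Rmax :=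
    pi_norm_le_of_abs_le ((hr0 (Classical.arbitrary S) (Classical.arbitrary O)).trans (hrR _ _))
      fun s o => (abs_of_nonneg (hr0 s o)).trans_le (hrR s o)
  have hQstar_norm : ‖Qstar‖ ≤ Rmax / (1 - γbar) :=
    (norm_le_of_isFixedPt_bellmanOp (contractingWith_bellmanOp r hp hγp hγlt)
      (hfix hQstar)).trans <| by
      rw [hK]; exact div_le_div_of_nonneg_right hr (by linarith)
  have hopt : dist (Q k) Qhat ≤ γbar ^ k * Rmax / (1 - γbar) := by
    rw [hiter]
    refine (dist_iterate_bellmanOp_le hTphat (hfix hQhat) k).trans ?_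
    rw [hK, mul_comm]
    gcongr
  have hest : dist Qhat QI ≤ ε₁ / (1 - γbar) := by
    simpa [hK] using dist_le_of_isFixedPt_bellmanOp hTphat (hfix hQhat)
      (hfix hQI) fun s o => by simpa only [hVstarMI] using (le_fmax _ (s, o)).trans hε₁
  have hint : dist QI Qstar ≤ γbar * ζ * (Rmax / (1 - γbar)) / (1 - γbar) := by
    simpa [hK] using dist_le_of_isFixedPt_bellmanOp (contractingWith_bellmanOp r hpI hγpI hγlt)
      (hfix hQI) (hfix hQstar) fun s o => abs_sum_mul_fmax_le
        (by simpa only [abs_sub_comm] using (le_fmax _ (s, o)).trans hζ) hQstar_norm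
  calc fmax (fun so : S × O => |Q k so.1 so.2 - Qstar so.1 so.2|)
      ≤ dist (Q k) Qstar := fmax_abs_sub_le_dist _ _
    _ ≤ dist (Q k) Qhat + dist Qhat QI + dist QI Qstar := dist_triangle4 _ _ _ _
    _ ≤ _ := (add_le_add (add_le_add hopt hest) hint).trans_eq <| by
      field_simp
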